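/- arXiv:1805.06411 — 2 statements merged into one kernel-verified Lean document; each statement's English description precedes it below -/
import Mathlib

section
/- Fair exchange for the requester: model the protocol as a state machine where the requester signs the channel update for balance b + d·r only after verifying a TEE attestation binding (ciphertext, k_hashed), and the contract pays v to the executing node only given both signatures on H(id ‖ v ‖ k_hashed) and a preimage k of k_hashed. Then in every reachable protocol state where the executing node has been paid v > 0, the requester possesses a key decrypting the attested ciphertext. -/
/-- Protocol state. The `attested` field is the (ghost) key/plaintext pair
underlying the TEE-attested ciphertext `Enc key m` and hash `H key`;
`signedBal` is the balance the requester has signed (on `H key`);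
`keys` are the keys the requester possesses; `paid` is the amount paid out
to the executing node. -/
structure PState (Key Msg : Type) where
  attested : Option (Key × Msg)
  signedBal : Option ℕ
  keys : List Key
  paid : ℕ

/-- Protocol transitions: (a) execute, (b) sign, (c) reveal, (d) close. -/
inductive Step {Key Digest Msg : Type} (H : Key → Digest) :
    PState Key Msg → PState Key Msg → Prop
  | execute (s : PState Key Msg) (key : Key) (m : Msg)
      (h : s.attested = none) :
      Step H s { s with attested := some (key, m) }
  | sign (s : PState Key Msg) (key : Key) (m : Msg) (b d r : ℕ)
      (h : s.attested = some (key, m)) :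
      Step H s { s with signedBal := some (b + d * r) }
  | reveal (s : PState Key Msg) (key : Key) (m : Msg) (k : Key)
      (h : s.attested = some (key, m)) (hk : H k = H key) :
      Step H s { s with keys := k :: s.keys }
  | close (s : PState Key Msg) (key : Key) (m : Msg) (k : Key) (v : ℕ)
      (h : s.attested = some (key, m)) (hs : s.signedBal = some v)
      (hk : H k = H key) :
      Step H s { s with keys := k :: s.keys, paid := v }

/-- Initial protocol state. -/
def initState (Key Msg : Type) : PState Key Msg := ⟨none, none, [], 0⟩

theorem paid_implies_requester_can_decrypt {Key Digest Ct Msg : Type}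
    (H : Key → Digest) (hH : Function.Injective H)
    (Enc : Key → Msg → Ct) (Dec : Key → Ct → Msg)
    (hdec : ∀ (k : Key) (m : Msg), Dec k (Enc k m) = m)
    (s : PState Key Msg)
    (hreach : Relation.ReflTransGen (Step H) (initState Key Msg) s)
    (hpaid : 0 < s.paid) :
    ∃ (key : Key) (m : Msg), s.attested = some (key, m) ∧
      ∃ k ∈ s.keys, Dec k (Enc key m) = m := by
  suffices h : 0 < s.paid → ∃ key m, s.attested = some (key, m) ∧ key ∈ s.keys by
    obtain ⟨key, m, ha, hk⟩ := h hpaid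
    exact ⟨key, m, ha, key, hk, hdec key m⟩
  clear hpaid
  induction hreach with
  | refl => intro h; simp [initState] at h
  | tail _ hstep ih =>
    intro hp
    cases hstep with
    | execute key m h =>
      obtain ⟨k', m', ha, _⟩ := ih hp
      simp [ha] at h
    | sign key m b d r h =>
      obtain ⟨k', m', ha, hk⟩ := ih hp
      exact ⟨k', m', ha, hk⟩
    | reveal key m k h hk =>
      obtain ⟨k', m', ha, hk'⟩ := ih hp
      exact ⟨k', m', ha, List.mem_cons_of_mem _ hk'⟩
    | close key m k v h hs hk =>
      exact ⟨key, m, h, by simp [hH hk]⟩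
end

section
/- Termination monotonicity: for a well-behaved Enclave function p where the performed-cycles output satisfies d ≤ c for every request of c cycles, and where reaching a terminal state means d < c forces all subsequent executions from the resulting state to perform 0 cycles, the total cycles performed over any sequence of rounds is at most the cycles performed by a single execution with the summed budget. -/
/-- The splitting property defining a well-behaved Enclave function. -/
def WellBehaved {State Output : Type} [DecidableEq Output]
    (p : State → ℕ → State × Finset Output × ℕ) : Prop :=
  ∀ (s : State) (a b : ℕ) (s1 s2 : State) (O1 O2 : Finset Output) (d1 d2 : ℕ),
    p s a = (s1, O1, d1) → p s1 b = (s2, O2, d2) →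
      p s (a + b) = (s2, O1 ∪ O2, d1 + d2)

/-- Iterated execution of `p` over a list of cycle budgets. -/
def runList {State Output : Type} [DecidableEq Output]
    (p : State → ℕ → State × Finset Output × ℕ) :
    State → List ℕ → State × Finset Output × ℕ
  | s, [] => (s, ∅, 0)
  | s, c :: cs =>
      let r := p s c
      let r' := runList p r.1 cs
      (r'.1, r.2.1 ∪ r'.2.1, r.2.2 + r'.2.2)

lemma runList_eq_p {State Output : Type} [DecidableEq Output]
    (p : State → ℕ → State × Finset Output × ℕ) (hp : WellBehaved p) :
    ∀ (cs : List ℕ), cs ≠ [] → ∀ s : State, runList p s cs = p s cs.sum := by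
  intro cs
  induction cs with
  | nil => intro h; exact absurd rfl h
  | cons c cs ih =>
    intro _ s
    cases cs with
    | nil =>
      simp [runList]
    | cons c' cs' =>
      have hrec := ih (by simp) (p s c).1
      show ((runList p (p s c).1 (c' :: cs')).1,
          (p s c).2.1 ∪ (runList p (p s c).1 (c' :: cs')).2.1,
          (p s c).2.2 + (runList p (p s c).1 (c' :: cs')).2.2) = _
      rw [hrec]
      have h1 : p s c = ((p s c).1, (p s c).2.1, (p s c).2.2) := rfl
      have h2 : p (p s c).1 ((c' :: cs').sum) =
          ((p (p s c).1 ((c' :: cs').sum)).1, (p (p s c).1 ((c' :: cs').sum)).2.1,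
            (p (p s c).1 ((c' :: cs').sum)).2.2) := rfl
      have := hp s c ((c' :: cs').sum) _ _ _ _ _ _ h1 h2
      rw [show (c :: c' :: cs').sum = c + (c' :: cs').sum from rfl, this]

theorem total_cycles_le_budget {State Output : Type} [DecidableEq Output]
    (p : State → ℕ → State × Finset Output × ℕ) (hp : WellBehaved p)
    (hbound : ∀ (s : State) (c : ℕ), (p s c).2.2 ≤ c)
    (s0 : State) (cs : List ℕ) (hne : cs ≠ []) :
    (runList p s0 cs).2.2 = (p s0 cs.sum).2.2 ∧
      (runList p s0 cs).2.2 ≤ cs.sum := by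
  have h := runList_eq_p p hp cs hne s0
  rw [h]
  exact ⟨rfl, hbound s0 cs.sum⟩
end
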